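/- Let m and n be positive integers and let S ⊆ [m]×[n]. The set of points {(e_i, e_j) : (i,j) ∈ S} is an affine basis of the affine hull of the full vertex set {(e_i, e_j) : i ∈ [m], j ∈ [n]} of Δ_{m−1}×Δ_{n−1} (i.e., it is affinely independent and affinely spans this affine hull) if and only if the bipartite graph on vertex set [m] ⊔ [n] with edge set S is a spanning tree of the complete bipartite graph K_{[m],[n]}, that is, it is connected, contains no cycle, and every vertex of [m] ⊔ [n] is incident to an edge of S. -/

import Mathlib

/-- The point `(e_i, e_j)` of `Δ_{m-1} × Δ_{n-1} ⊆ ℝ^m × ℝ^n`. -/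
noncomputable def vtx (m n : ℕ) (p : Fin m × Fin n) : (Fin m → ℝ) × (Fin n → ℝ) :=
  (Pi.single p.1 1, Pi.single p.2 1)

/-- The bipartite graph on `[m] ⊔ [n]` with edge set `S`. -/
def bipGraph (m n : ℕ) (S : Finset (Fin m × Fin n)) : SimpleGraph (Fin m ⊕ Fin n) where
  Adj u v := (∃ p ∈ S, u = Sum.inl p.1 ∧ v = Sum.inr p.2) ∨
             (∃ p ∈ S, u = Sum.inr p.2 ∧ v = Sum.inl p.1)
  symm := by
    constructor
    rintro u v (⟨p, hp, rfl, rfl⟩ | ⟨p, hp, rfl, rfl⟩)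
    · exact Or.inr ⟨p, hp, rfl, rfl⟩
    · exact Or.inl ⟨p, hp, rfl, rfl⟩
  loopless := by
    constructor
    rintro u (⟨p, hp, h1, h2⟩ | ⟨p, hp, h1, h2⟩) <;> simp_all

/-!
Everything is read off the reachability relation of the graph `G_S`: `(e_a, e_b)` lies in the affine
(equivalently, linear) span of the points of `S` iff `a` and `b` are joined by a path in `G_S`. Paths
give membership because the span is closed under completing rectangles,
`(e_a, e_b') = (e_a, e_b) - (e_a', e_b) + (e_a', e_b')`. Conversely, if `f` is the indicator of the
component of `a`, the functional `(x, y) ↦ ∑ f(i) x_i - ∑ f(j) y_j` vanishes on the points of `S`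
and hence on their span, while at `(e_a, e_b)` it equals `1 - f(b)`.
So the points span the hull iff `G_S` is connected, and they are independent iff no edge lies in the
span of the others, i.e. every edge is a bridge, i.e. `G_S` is acyclic.
-/

open SimpleGraph Set

theorem SimpleGraph.connected_iff_forall_reachable_inl_inr {α β : Type*} [Nonempty α]
    [Nonempty β] {G : SimpleGraph (α ⊕ β)} :
    G.Connected ↔ ∀ a b, G.Reachable (.inl a) (.inr b) := by
  refine ⟨fun h a b ↦ h.preconnected _ _, fun h ↦ ?_⟩
  obtain ⟨a₀⟩ := ‹Nonempty α›
  obtain ⟨b₀⟩ := ‹Nonempty β›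
  have to_b₀ : ∀ u, G.Reachable u (.inr b₀) := by
    rintro (a | b)
    · exact h a b₀
    · exact (h a₀ b).symm.trans (h a₀ b₀)
  exact (connected_iff G).2 ⟨fun u v ↦ (to_b₀ u).trans (to_b₀ v).symm, ⟨.inr b₀⟩⟩

namespace bipGraph

variable {m n : ℕ} {S : Finset (Fin m × Fin n)} {a a' : Fin m} {b b' : Fin n}

@[simp]
theorem adj_inl_inr : (bipGraph m n S).Adj (.inl a) (.inr b) ↔ (a, b) ∈ S := by
  simp [bipGraph]

@[simp]
theorem adj_inr_inl : (bipGraph m n S).Adj (.inr b) (.inl a) ↔ (a, b) ∈ S := by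
  simp [bipGraph]

@[simp]
theorem not_adj_inl_inl : ¬(bipGraph m n S).Adj (.inl a) (.inl a') := by
  simp [bipGraph]

@[simp]
theorem not_adj_inr_inr : ¬(bipGraph m n S).Adj (.inr b) (.inr b') := by
  simp [bipGraph]

theorem deleteEdges_eq_erase (p : Fin m × Fin n) :
    (bipGraph m n S).deleteEdges {s(.inl p.1, .inr p.2)} = bipGraph m n (S.erase p) := by
  ext (a | b) (a' | b') <;> simp [Prod.ext_iff, and_comm]

theorem isAcyclic_iff_forall_not_reachable_erase :
    (bipGraph m n S).IsAcyclic ↔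
      ∀ p ∈ S, ¬(bipGraph m n (S.erase p)).Reachable (.inl p.1) (.inr p.2) := by
  simp_rw [isAcyclic_iff_forall_adj_isBridge]
  refine ⟨fun h p hp ↦ ?_, fun h ↦ ?_⟩
  · simpa [isBridge_iff, deleteEdges_eq_erase] using h (adj_inl_inr.2 hp)
  · rintro (a | b) (a' | b') hadj <;> simp only [adj_inl_inr, adj_inr_inl, not_adj_inl_inl,
      not_adj_inr_inr] at hadj
    · exact isBridge_iff.2 (deleteEdges_eq_erase (a, b') ▸ h _ hadj)
    · rw [Sym2.eq_swap]
      exact isBridge_iff.2 (deleteEdges_eq_erase (a', b) ▸ h _ hadj)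

theorem mem_of_reachable {E : Set (Fin m × Fin n)} (hSE : ∀ p ∈ S, p ∈ E)
    (hE : ∀ a a' b b', (a, b) ∈ E → (a', b) ∈ E → (a', b') ∈ E → (a, b') ∈ E)
    (h : (bipGraph m n S).Reachable (.inl a) (.inr b)) : (a, b) ∈ E := by
  obtain ⟨w⟩ := h
  suffices ∀ {u v} (w : (bipGraph m n S).Walk u v) (a : Fin m) (b : Fin n), v = .inr b →
      (u = .inl a ∨ (bipGraph m n S).Adj u (.inl a)) → (a, b) ∈ E from
    this w a b rfl (.inl rfl)
  intro u v w
  induction w with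
  | nil =>
    rintro a b rfl (h | h)
    · cases h
    · exact hSE _ (adj_inr_inl.1 h)
  | @cons u x v hux w ih =>
    rintro a b rfl (rfl | h)
    · exact ih a b rfl (.inr hux.symm)
    · rcases u with a₁ | c <;> rcases x with a' | c' <;>
        simp only [adj_inr_inl, not_adj_inl_inl, not_adj_inr_inr] at h hux
      exact hE a a' c b (hSE _ h) (hSE _ hux) (ih a' b rfl (.inl rfl))

end bipGraph

namespace vtx

variable {m n : ℕ} {S : Finset (Fin m × Fin n)} {a : Fin m} {b : Fin n}

theorem sub_add_eq (a a' : Fin m) (b b' : Fin n) :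
    vtx m n (a, b) - vtx m n (a', b) + vtx m n (a', b') = vtx m n (a, b') := by
  ext <;> simp [vtx]

theorem mem_affineSpan_of_reachable (h : (bipGraph m n S).Reachable (.inl a) (.inr b)) :
    vtx m n (a, b) ∈ affineSpan ℝ (vtx m n '' S) := by
  refine bipGraph.mem_of_reachable (E := {p | vtx m n p ∈ affineSpan ℝ (vtx m n '' S)})
    (fun p hp ↦ subset_affineSpan ℝ _ (mem_image_of_mem _ hp)) (fun a a' b b' h₁ h₂ h₃ ↦ ?_) h
  show vtx m n (a, b') ∈ affineSpan ℝ (vtx m n '' S)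
  rw [← sub_add_eq a a' b b']
  exact AffineSubspace.vadd_mem_of_mem_direction (AffineSubspace.vsub_mem_direction h₁ h₂) h₃

def potentialDiff (f : Fin m ⊕ Fin n → ℝ) : ((Fin m → ℝ) × (Fin n → ℝ)) →ₗ[ℝ] ℝ :=
  LinearMap.coprod (∑ i, f (.inl i) • LinearMap.proj i) (-∑ j, f (.inr j) • LinearMap.proj j)

@[simp]
theorem potentialDiff_vtx (f : Fin m ⊕ Fin n → ℝ) (p : Fin m × Fin n) :
    potentialDiff f (vtx m n p) = f (.inl p.1) - f (.inr p.2) := by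
  simp [potentialDiff, vtx, Pi.single_apply, sub_eq_add_neg]

theorem reachable_of_mem_span (h : vtx m n (a, b) ∈ Submodule.span ℝ (vtx m n '' S)) :
    (bipGraph m n S).Reachable (.inl a) (.inr b) := by
  classical
  let f : Fin m ⊕ Fin n → ℝ := fun v ↦
    if (bipGraph m n S).connectedComponentMk v = (bipGraph m n S).connectedComponentMk (.inl a)
    then 1 else 0
  have hker : Submodule.span ℝ (vtx m n '' S) ≤ LinearMap.ker (potentialDiff f) := by
    rw [Submodule.span_le]
    rintro _ ⟨p, hp, rfl⟩
    rw [SetLike.mem_coe, LinearMap.mem_ker, potentialDiff_vtx]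
    dsimp only [f]
    rw [ConnectedComponent.connectedComponentMk_eq_of_adj (bipGraph.adj_inl_inr.2 hp), sub_self]
  have hab := LinearMap.mem_ker.1 (hker h)
  rw [potentialDiff_vtx] at hab
  simp only [f, if_pos rfl] at hab
  split_ifs at hab with hcomp
  · exact (ConnectedComponent.eq.1 hcomp).symm
  · norm_num at hab

theorem affineIndependent_iff_isAcyclic :
    AffineIndependent ℝ (fun p : S ↦ vtx m n p) ↔ (bipGraph m n S).IsAcyclic := by
  rw [bipGraph.isAcyclic_iff_forall_not_reachable_erase]
  refine ⟨fun hind p hp hreach ↦ ?_, fun hac ↦ LinearIndependent.affineIndependent ℝ ?_⟩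
  · refine hind.notMem_affineSpan_sdiff ⟨p, hp⟩ univ ?_
    convert mem_affineSpan_of_reachable hreach using 2
    ext x
    simp only [mem_image, mem_sdiff, mem_univ, mem_singleton_iff, true_and, Subtype.exists,
      Subtype.mk.injEq, Finset.coe_erase, Finset.mem_coe]
    exact ⟨fun ⟨q, hq, hqp, hx⟩ ↦ ⟨q, ⟨hq, hqp⟩, hx⟩, fun ⟨q, ⟨hq, hqp⟩, hx⟩ ↦ ⟨q, hq, hqp, hx⟩⟩
  · refine linearIndepOn_iff_notMem_span.2 fun p hp hspan ↦ hac p hp (reachable_of_mem_span ?_)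
    rwa [Finset.coe_erase]

theorem affineSpan_eq_iff_forall_reachable :
    affineSpan ℝ (vtx m n '' S) = affineSpan ℝ (range (vtx m n)) ↔
      ∀ a b, (bipGraph m n S).Reachable (.inl a) (.inr b) := by
  refine ⟨fun h a b ↦ reachable_of_mem_span (affineSpan_subset_span ?_), fun h ↦ ?_⟩
  · rw [SetLike.mem_coe, h]
    exact subset_affineSpan ℝ _ (mem_range_self _)
  · refine le_antisymm (affineSpan_mono ℝ (image_subset_range _ _)) (affineSpan_le.2 ?_)
    rintro _ ⟨⟨a, b⟩, rfl⟩
    exact mem_affineSpan_of_reachable (h a b)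

end vtx

/-- The points `{(e_i, e_j) : (i,j) ∈ S}` form an affine basis of the affine hull
of the vertex set of `Δ_{m-1} × Δ_{n-1}` iff the bipartite graph with edge set `S`
is a spanning tree of `K_{[m],[n]}`: connected, acyclic and covering every vertex. -/
theorem dyckpaths_stmt2 (m n : ℕ) (hm : 0 < m) (hn : 0 < n)
    (S : Finset (Fin m × Fin n)) :
    (AffineIndependent ℝ (fun p : S => vtx m n (p : Fin m × Fin n)) ∧
      affineSpan ℝ (vtx m n '' (S : Set (Fin m × Fin n))) =
        affineSpan ℝ (Set.range (vtx m n))) ↔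
      ((bipGraph m n S).Connected ∧ (bipGraph m n S).IsAcyclic ∧
        (∀ i : Fin m, ∃ j : Fin n, (i, j) ∈ S) ∧
        (∀ j : Fin n, ∃ i : Fin m, (i, j) ∈ S)) := by
  have : Nonempty (Fin m) := ⟨⟨0, hm⟩⟩
  have : Nonempty (Fin n) := ⟨⟨0, hn⟩⟩
  have : Nontrivial (Fin m ⊕ Fin n) := ⟨⟨.inl ⟨0, hm⟩, .inr ⟨0, hn⟩, Sum.inl_ne_inr⟩⟩
  rw [vtx.affineIndependent_iff_isAcyclic, vtx.affineSpan_eq_iff_forall_reachable,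
    ← connected_iff_forall_reachable_inl_inr]
  refine ⟨fun ⟨hac, hconn⟩ ↦ ⟨hconn, hac, fun i ↦ ?_, fun j ↦ ?_⟩,
    fun ⟨hconn, hac, _⟩ ↦ ⟨hac, hconn⟩⟩
  · obtain ⟨_ | j, hij⟩ := hconn.preconnected.exists_adj_of_nontrivial (.inl i)
    · simp at hij
    · exact ⟨j, bipGraph.adj_inl_inr.1 hij⟩
  · obtain ⟨i | _, hij⟩ := hconn.preconnected.exists_adj_of_nontrivial (.inr j)
    · exact ⟨i, bipGraph.adj_inr_inl.1 hij⟩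
    · simp at hij
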